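/- arXiv:2004.12011 — 2 statements merged into one kernel-verified Lean document; each statement's English description precedes it below -/
import Mathlib

section
/- With μ ≠ 0, |μ| < α/a, a > 0, α > 0, γ ∈ ℝ, υ = 1 − (a/α)μ, and h₂(t) = a μ (1 − υ e^{−μ(T−t)})^{−1}, the function h₁(t) = (1 − υ e^{−μ(T−t)})^{−1}[(1 − 2aγ) μ (t−T) + υ(1 − e^{−μ(T−t)})] solves −h₁'(t) + μ(1 − h₁(t)) + (1/a) h₂(t) h₁(t) − 2γ h₂(t) = 0 on [0,T] with h₁(T) = 0. -/
/-!
Write `h₁ = N / D` with `D = 1 - υE`, `E = e^{-μ(T-t)}`. Then `D' = -υμE` and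
`N' = (1 - 2aγ)μ + μ(D - 1)`, so after multiplying the equation by `D²` the terms carrying `N`
cancel and what is left is `μD(1 - (1 - 2aγ) - 2aγ) = 0`. This is an identity in `υ` and `E`,
so the only analytic input is `D ≠ 0` on `[0, T]`, which the bound `|μ| < α / a` provides.
-/

open Real

/-- For `μ > 0` the factor `1 - κμ` lies in `(0, 1)` and the exponential in `(0, 1]`; for `μ < 0`
both exceed `1`. Either way their product misses `1`. -/
lemma one_sub_mul_exp_ne_zero {κ μ τ : ℝ} (hκ : 0 < κ) (hκμ : κ * μ < 1) (hμ : μ ≠ 0)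
    (hτ : 0 ≤ τ) : 1 - (1 - κ * μ) * exp (-μ * τ) ≠ 0 := by
  rcases hμ.lt_or_gt with hneg | hpos
  · have hexp : 1 ≤ exp (-μ * τ) := one_le_exp (by nlinarith)
    have hυ : 1 < 1 - κ * μ := by nlinarith
    nlinarith
  · have hexp : exp (-μ * τ) ≤ 1 := exp_le_one_iff.2 (by nlinarith)
    have hυ : 0 < 1 - κ * μ := by linarith
    nlinarith [exp_pos (-μ * τ), mul_pos hκ hpos]

lemma hasDerivAt_exp_neg_mul_sub (μ T t : ℝ) :
    HasDerivAt (fun s => exp (-μ * (T - s))) (μ * exp (-μ * (T - t))) t := by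
  simpa [mul_comm] using ((((hasDerivAt_id t).const_sub T).const_mul (-μ))).exp

theorem h1_solves_ode_mu_ne_zero_general (a α γ μ T : ℝ) (ha : 0 < a) (hα : 0 < α)
    (hμ : μ ≠ 0) (hμabs : |μ| < α / a) (h₁ h₂ : ℝ → ℝ)
    (hh2 : ∀ t, h₂ t = a * μ * (1 - (1 - (a / α) * μ) * Real.exp (-μ * (T - t)))⁻¹)
    (hh1 : ∀ t, h₁ t = (1 - (1 - (a / α) * μ) * Real.exp (-μ * (T - t)))⁻¹ *
      ((1 - 2 * a * γ) * μ * (t - T) +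
        (1 - (a / α) * μ) * (1 - Real.exp (-μ * (T - t))))) :
    (∀ t ∈ Set.Icc (0 : ℝ) T, ∃ d : ℝ, HasDerivAt h₁ d t ∧
      -d + μ * (1 - h₁ t) + (1 / a) * h₂ t * h₁ t - 2 * γ * h₂ t = 0) ∧ h₁ T = 0 := by
  have hκμ : a / α * μ < 1 := by
    rw [div_mul_eq_mul_div, div_lt_one hα]
    have := (lt_div_iff₀ ha).1 ((le_abs_self μ).trans_lt hμabs)
    linarith
  refine ⟨fun t ht => ?_, by simp [hh1]⟩
  have hD := one_sub_mul_exp_ne_zero (div_pos ha hα) hκμ hμ (sub_nonneg.2 ht.2)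
  have hE := hasDerivAt_exp_neg_mul_sub μ T t
  rw [funext hh1]
  refine ⟨_, (((hE.const_mul _).const_sub 1).inv hD).mul
    ((((hasDerivAt_id t).sub_const T).const_mul _).add ((hE.const_sub 1).const_mul _)), ?_⟩
  simp only [hh2, Pi.inv_apply]
  generalize 1 - a / α * μ = υ at hD ⊢
  generalize rexp (-μ * (T - t)) = E at hD ⊢
  field_simp
  ring

/-- Nonzero-drift case: with `υ = 1 − (a/α)μ` and
`h₂(t) = aμ (1 − υ e^{−μ(T−t)})⁻¹`, the function
`h₁(t) = (1 − υ e^{−μ(T−t)})⁻¹ [(1 − 2aγ) μ (t−T) + υ (1 − e^{−μ(T−t)})]` solves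
`−h₁' + μ(1 − h₁) + (1/a) h₂ h₁ − 2γ h₂ = 0` on `[0,T]` with `h₁(T) = 0`. -/
theorem h1_solves_ode_mu_ne_zero (a α γ μ T : ℝ) (ha : 0 < a) (hα : 0 < α) (hT : 0 < T)
    (hμ : μ ≠ 0) (hμabs : |μ| < α / a) (h₁ h₂ : ℝ → ℝ)
    (hh2 : ∀ t, h₂ t = a * μ * (1 - (1 - (a / α) * μ) * Real.exp (-μ * (T - t)))⁻¹)
    (hh1 : ∀ t, h₁ t = (1 - (1 - (a / α) * μ) * Real.exp (-μ * (T - t)))⁻¹ *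
      ((1 - 2 * a * γ) * μ * (t - T) +
        (1 - (a / α) * μ) * (1 - Real.exp (-μ * (T - t))))) :
    (∀ t ∈ Set.Icc (0 : ℝ) T, ∃ d : ℝ, HasDerivAt h₁ d t ∧
      -d + μ * (1 - h₁ t) + (1 / a) * h₂ t * h₁ t - 2 * γ * h₂ t = 0) ∧ h₁ T = 0 :=
  h1_solves_ode_mu_ne_zero_general a α γ μ T ha hα hμ hμabs h₁ h₂ hh2 hh1
end

section
/- For μ ≠ 0 and a > 0, the limit as α → +∞ of h₂(t) equals a μ / (1 − e^{−μ(T−t)}) for each t ∈ [0,T), and this limiting function satisfies lim_{t→T} h₂∞(t)·(T−t) = a. Similarly the limit of h₁ equals h₁∞(t) = (1 − e^{−μ(T−t)})^{−1}(1 − 2aγ)μ(t−T) + 1, and lim_{t→T} h₁∞(t) = 2aγ. -/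
/-! As `α → ∞` the factor `υ = 1 - (a/α)μ` tends to `1`, and for `t < T` both `h₂` and `h₁` are
continuous in `υ` at `υ = 1` because `1 - e^{-μ(T-t)} ≠ 0`. The limits `t → T⁻` reduce, via
`s = T - t`, to `(1 - e^{-μs}) / s → μ`, the derivative of `s ↦ 1 - e^{-μs}` at `0`. -/

open Filter Topology

lemma one_sub_exp_neg_mul_ne_zero {μ s : ℝ} (hμ : μ ≠ 0) (hs : s ≠ 0) :
    1 - Real.exp (-μ * s) ≠ 0 :=
  sub_ne_zero.2 fun h => mul_ne_zero (neg_ne_zero.2 hμ) hs ((Real.exp_eq_one_iff _).1 h.symm)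

lemma tendsto_div_one_sub_exp_neg_mul {μ : ℝ} (hμ : μ ≠ 0) :
    Tendsto (fun s : ℝ => s / (1 - Real.exp (-μ * s))) (𝓝[≠] 0) (𝓝 μ⁻¹) := by
  have hderiv : HasDerivAt (fun s : ℝ => 1 - Real.exp (-μ * s)) μ 0 := by
    simpa using (((hasDerivAt_id (0 : ℝ)).const_mul (-μ)).exp).const_sub 1
  refine ((hasDerivAt_iff_tendsto_slope.1 hderiv).inv₀ hμ).congr fun s => ?_
  simp [slope_def_field, inv_div]

lemma tendsto_sub_left_nhdsLT (T : ℝ) :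
    Tendsto (fun t : ℝ => T - t) (𝓝[<] T) (𝓝[>] 0) := by
  refine tendsto_nhdsWithin_iff.2 ⟨?_, ?_⟩
  · exact ((continuous_sub_left T).tendsto' T 0 (sub_self T)).mono_left nhdsWithin_le_nhds
  · filter_upwards [self_mem_nhdsWithin] with t ht
    exact sub_pos.2 (Set.mem_Iio.1 ht)

lemma tendsto_sub_div_one_sub_exp_nhdsLT {μ : ℝ} (hμ : μ ≠ 0) (T : ℝ) :
    Tendsto (fun t : ℝ => (T - t) / (1 - Real.exp (-μ * (T - t)))) (𝓝[<] T) (𝓝 μ⁻¹) :=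
  (tendsto_div_one_sub_exp_neg_mul hμ).comp <|
    tendsto_nhdsWithin_mono_right (fun _ hs => ne_of_gt hs) (tendsto_sub_left_nhdsLT T)

lemma tendsto_one_sub_div_mul_atTop (a μ : ℝ) :
    Tendsto (fun α : ℝ => 1 - (a / α) * μ) atTop (𝓝 1) := by
  simpa using ((tendsto_const_nhds.div_atTop tendsto_id).mul_const μ).const_sub (1 : ℝ)

lemma tendsto_one_sub_one_sub_div_mul_mul_atTop (a μ E : ℝ) :
    Tendsto (fun α : ℝ => 1 - (1 - (a / α) * μ) * E) atTop (𝓝 (1 - E)) := by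
  simpa using ((tendsto_one_sub_div_mul_atTop a μ).mul_const E).const_sub (1 : ℝ)

theorem limit_infinite_penalty_mu_ne_zero_general (a γ μ T : ℝ) (hμ : μ ≠ 0) :
    (∀ t ∈ Set.Ico (0 : ℝ) T,
      Tendsto (fun α : ℝ =>
          a * μ / (1 - (1 - (a / α) * μ) * Real.exp (-μ * (T - t)))) atTop
        (nhds (a * μ / (1 - Real.exp (-μ * (T - t)))))) ∧
    Tendsto (fun t : ℝ => a * μ / (1 - Real.exp (-μ * (T - t))) * (T - t))
      (nhdsWithin T (Set.Iio T)) (nhds a) ∧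
    (∀ t ∈ Set.Ico (0 : ℝ) T,
      Tendsto (fun α : ℝ =>
          (1 - (1 - (a / α) * μ) * Real.exp (-μ * (T - t)))⁻¹ *
            ((1 - 2 * a * γ) * μ * (t - T) +
              (1 - (a / α) * μ) * (1 - Real.exp (-μ * (T - t))))) atTop
        (nhds ((1 - Real.exp (-μ * (T - t)))⁻¹ * ((1 - 2 * a * γ) * μ * (t - T)) + 1))) ∧
    Tendsto
      (fun t : ℝ =>
        (1 - Real.exp (-μ * (T - t)))⁻¹ * ((1 - 2 * a * γ) * μ * (t - T)) + 1)
      (nhdsWithin T (Set.Iio T)) (nhds (2 * a * γ)) := by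
  have hne {t : ℝ} (ht : t ∈ Set.Ico (0 : ℝ) T) : 1 - Real.exp (-μ * (T - t)) ≠ 0 :=
    one_sub_exp_neg_mul_ne_zero hμ (sub_ne_zero.2 ht.2.ne')
  have hquot := tendsto_sub_div_one_sub_exp_nhdsLT hμ T
  refine ⟨fun t ht => ?_, ?_, fun t ht => ?_, ?_⟩
  · exact tendsto_const_nhds.div (tendsto_one_sub_one_sub_div_mul_mul_atTop a μ _) (hne ht)
  · convert hquot.const_mul (a * μ) using 2 <;> field_simp
  · convert ((tendsto_one_sub_one_sub_div_mul_mul_atTop a μ _).inv₀ (hne ht)).mul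
      (tendsto_const_nhds.add ((tendsto_one_sub_div_mul_atTop a μ).mul_const _)) using 2
    rw [one_mul, mul_add, inv_mul_cancel₀ (hne ht)]
  · convert (hquot.const_mul (-(1 - 2 * a * γ) * μ)).add_const 1 using 2
    · rw [div_eq_mul_inv]; ring
    · field_simp; ring

/-- Nonzero-drift case, limit of infinite terminal penalty: as `α → ∞`,
`h₂(t) → aμ/(1 − e^{−μ(T−t)})` and `h₁(t) → (1 − e^{−μ(T−t)})⁻¹ (1−2aγ) μ (t−T) + 1`
for each `t ∈ [0,T)`; moreover, as `t → T⁻`, `h₂∞(t)(T−t) → a` and `h₁∞(t) → 2aγ`. -/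
theorem limit_infinite_penalty_mu_ne_zero (a γ μ T : ℝ) (ha : 0 < a) (hμ : μ ≠ 0)
    (hT : 0 < T) :
    (∀ t ∈ Set.Ico (0 : ℝ) T,
      Tendsto (fun α : ℝ =>
          a * μ / (1 - (1 - (a / α) * μ) * Real.exp (-μ * (T - t)))) atTop
        (nhds (a * μ / (1 - Real.exp (-μ * (T - t)))))) ∧
    Tendsto (fun t : ℝ => a * μ / (1 - Real.exp (-μ * (T - t))) * (T - t))
      (nhdsWithin T (Set.Iio T)) (nhds a) ∧
    (∀ t ∈ Set.Ico (0 : ℝ) T,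
      Tendsto (fun α : ℝ =>
          (1 - (1 - (a / α) * μ) * Real.exp (-μ * (T - t)))⁻¹ *
            ((1 - 2 * a * γ) * μ * (t - T) +
              (1 - (a / α) * μ) * (1 - Real.exp (-μ * (T - t))))) atTop
        (nhds ((1 - Real.exp (-μ * (T - t)))⁻¹ * ((1 - 2 * a * γ) * μ * (t - T)) + 1))) ∧
    Tendsto
      (fun t : ℝ =>
        (1 - Real.exp (-μ * (T - t)))⁻¹ * ((1 - 2 * a * γ) * μ * (t - T)) + 1)
      (nhdsWithin T (Set.Iio T)) (nhds (2 * a * γ)) :=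
  limit_infinite_penalty_mu_ne_zero_general a γ μ T hμ
end
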